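/- arXiv:2006.16214 — 3 statements merged into one kernel-verified Lean document; each statement's English description precedes it below -/
import Mathlib

section
/- Let θ0 ∈ Θ be the true parameter and let the observed data S be distributed on 𝕊 according to the probability mass function f(·|θ0). Then for every α ∈ (0,1), the basic confidence set construction satisfies P(θ0 ∈ Θ̂_{1−α}(S)) ≥ 1 − α; equivalently, ∑_{s ∈ 𝕊 : f(s|θ0)·ν(f(s|θ0),θ0) ≤ α} f(s|θ0) ≤ α. -/
open Finset

/-- Level-set count: ν(z,θ) = |{s ∈ 𝕊 : 0 < f(s|θ) ≤ z}|. -/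
noncomputable def levelCount {S Θ : Type*} [Fintype S] [DecidableEq S]
    (f : Θ → S → ℝ) (z : ℝ) (θ : Θ) : ℕ :=
  (Finset.univ.filter (fun s => 0 < f θ s ∧ f θ s ≤ z)).card

/-- Validity of the basic confidence set construction (Theorem 1):
if θ0 is the true parameter, then the probability (under f(·|θ0)) of the
non-coverage event {s : f(s|θ0)·ν(f(s|θ0),θ0) ≤ α} is at most α, i.e.
P(θ0 ∈ Θ̂_{1−α}(S)) ≥ 1 − α. -/
theorem basic_confidence_set_coverage
    {S Θ : Type*} [Fintype S] [DecidableEq S] [Fintype Θ]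
    (f : Θ → S → ℝ)
    (hnonneg : ∀ θ s, 0 ≤ f θ s)
    (hsum : ∀ θ, ∑ s, f θ s = 1)
    (θ0 : Θ) (α : ℝ) (hα : α ∈ Set.Ioo (0 : ℝ) 1) :
    ∑ s ∈ Finset.univ.filter
        (fun s => f θ0 s * (levelCount f (f θ0 s) θ0 : ℝ) ≤ α),
      f θ0 s ≤ α := by
  classical
  set B : Finset S := Finset.univ.filter
      (fun s => f θ0 s * (levelCount f (f θ0 s) θ0 : ℝ) ≤ α) with hB
  set B' : Finset S := B.filter (fun s => 0 < f θ0 s) with hB'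
  have hsumB : ∑ s ∈ B, f θ0 s = ∑ s ∈ B', f θ0 s := by
    refine (Finset.sum_subset (Finset.filter_subset _ _) ?_).symm
    intro s hs hns
    have : ¬ 0 < f θ0 s := fun h => hns (Finset.mem_filter.mpr ⟨hs, h⟩)
    linarith [hnonneg θ0 s]
  rw [hsumB]
  by_cases hBe : B' = ∅
  · rw [hBe]; simpa using le_of_lt hα.1
  · obtain ⟨s0, hs0, hmax⟩ := Finset.exists_max_image B' (fun s => f θ0 s)
      (Finset.nonempty_of_ne_empty hBe)
    set L : Finset S := Finset.univ.filter
        (fun s => 0 < f θ0 s ∧ f θ0 s ≤ f θ0 s0) with hL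
    have hsub : B' ⊆ L := by
      intro s hs
      have hs' := Finset.mem_filter.mp hs
      exact Finset.mem_filter.mpr ⟨Finset.mem_univ s, hs'.2, hmax s hs⟩
    have h1 : ∑ s ∈ B', f θ0 s ≤ ∑ s ∈ L, f θ0 s :=
      Finset.sum_le_sum_of_subset_of_nonneg hsub (fun s _ _ => hnonneg θ0 s)
    have h2 : ∑ s ∈ L, f θ0 s ≤ (L.card : ℝ) * f θ0 s0 := by
      calc ∑ s ∈ L, f θ0 s ≤ ∑ _s ∈ L, f θ0 s0 :=
            Finset.sum_le_sum (fun s hs => (Finset.mem_filter.mp hs).2.2)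
        _ = (L.card : ℝ) * f θ0 s0 := by
            rw [Finset.sum_const, nsmul_eq_mul]
    have h3 : f θ0 s0 * (levelCount f (f θ0 s0) θ0 : ℝ) ≤ α := by
      have := Finset.mem_filter.mp ((Finset.mem_filter.mp hs0).1)
      exact this.2
    have hcard : (levelCount f (f θ0 s0) θ0 : ℕ) = L.card := rfl
    calc ∑ s ∈ B', f θ0 s ≤ (L.card : ℝ) * f θ0 s0 := le_trans h1 h2
      _ = f θ0 s0 * (levelCount f (f θ0 s0) θ0 : ℝ) := by rw [hcard]; ring
      _ ≤ α := h3
end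

section
/- Let θ0 ∈ Θ be the true parameter and let the observed data S be distributed on 𝕊 according to the probability mass function f(·|θ0). Then for every α ∈ (0,1), the alternative confidence set construction satisfies P(θ0 ∈ Θ̂^alt_{1−α}(S)) ≥ 1 − α; equivalently, ∑_{s ∈ 𝕊 : G(s,θ0) ≤ α} f(s|θ0) ≤ α, where G(s,θ) = ∑_{s'∈𝕊} 1{f(s'|θ) ≤ f(s|θ)}·f(s'|θ). -/
open Finset

/-- G(s,θ) = ∑_{s'∈𝕊} 1{f(s'|θ) ≤ f(s|θ)}·f(s'|θ), the discrete p-value of the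
alternative construction. -/
noncomputable def Galt {S Θ : Type*} [Fintype S]
    (f : Θ → S → ℝ) (s : S) (θ : Θ) : ℝ :=
  ∑ s', if f θ s' ≤ f θ s then f θ s' else 0

/-- Validity of the alternative confidence set construction (Theorem 2):
if θ0 is the true parameter, then the probability (under f(·|θ0)) of the
non-coverage event {s : G(s,θ0) ≤ α} is at most α, i.e.
P(θ0 ∈ Θ̂^alt_{1−α}(S)) ≥ 1 − α. -/
theorem alt_confidence_set_coverage
    {S Θ : Type*} [Fintype S] [Fintype Θ]
    (f : Θ → S → ℝ)
    (hnonneg : ∀ θ s, 0 ≤ f θ s)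
    (hsum : ∀ θ, ∑ s, f θ s = 1)
    (θ0 : Θ) (α : ℝ) (hα : α ∈ Set.Ioo (0 : ℝ) 1) :
    ∑ s ∈ Finset.univ.filter (fun s => Galt f s θ0 ≤ α), f θ0 s ≤ α := by
  set E := Finset.univ.filter (fun s => Galt f s θ0 ≤ α) with hE
  rcases E.eq_empty_or_nonempty with h | h
  · rw [h, Finset.sum_empty]; exact le_of_lt hα.1
  · obtain ⟨s0, hs0, hmax⟩ := E.exists_max_image (f θ0) h
    have hs0' : Galt f s0 θ0 ≤ α := (Finset.mem_filter.mp hs0).2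
    calc ∑ s ∈ E, f θ0 s
        = ∑ s ∈ E, (if f θ0 s ≤ f θ0 s0 then f θ0 s else 0) := by
          exact Finset.sum_congr rfl (fun s hs => (if_pos (hmax s hs)).symm)
      _ ≤ ∑ s, (if f θ0 s ≤ f θ0 s0 then f θ0 s else 0) := by
          apply Finset.sum_le_sum_of_subset_of_nonneg (Finset.subset_univ E)
          intro s _ _
          split_ifs
          · exact hnonneg θ0 s
          · exact le_refl 0
      _ = Galt f s0 θ0 := rfl
      _ ≤ α := hs0'
end

section
/- Let θ0 ∈ Θ be the true parameter, let S be distributed on 𝕊 according to f(·|θ0), let G(s,θ0) = ∑_{s'∈𝕊} 1{f(s'|θ0) ≤ f(s|θ0)}·f(s'|θ0), and define ε = max_{s∈𝕊} P(f(S|θ0) = f(s|θ0)) = max_{s∈𝕊} ∑_{s'∈𝕊 : f(s'|θ0) = f(s|θ0)} f(s'|θ0). Then for every α ∈ (0,1), the non-coverage probability of the alternative construction satisfies P(θ0 ∉ Θ̂^alt_{1−α}(S)) ≥ α − ε; equivalently, ∑_{s ∈ 𝕊 : G(s,θ0) ≤ α} f(s|θ0) ≥ α − ε. -/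
/-!
Let `A = {s : G(s, θ₀) ≤ α}`. If `A` is everything, its mass is `1 ≥ α - ε`. Otherwise take
`s⋆ ∉ A` of least likelihood `f(s⋆|θ₀)`. Every point strictly less likely than `s⋆` lies in `A`, and
`G(s⋆, θ₀)` splits as the mass strictly below the level of `s⋆` plus the mass of that level, so
`α < G(s⋆, θ₀) ≤ P(A) + ε`.
-/

open Finset

section

variable {S Θ : Type*} [Fintype S] (f : Θ → S → ℝ) (θ : Θ)

theorem Galt_eq_sum_lt_add_sum_eq (s : S) :
    Galt f s θ = (∑ s', if f θ s' < f θ s then f θ s' else 0) +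
      ∑ s', if f θ s' = f θ s then f θ s' else 0 := by
  rw [Galt, ← sum_add_distrib]
  refine sum_congr rfl fun s' _ => ?_
  rcases lt_trichotomy (f θ s') (f θ s) with h | h | h
  · simp [h, h.le, h.ne]
  · simp [h]
  · simp [h.not_ge, h.not_gt, h.ne']

theorem sum_lt_le_sum_filter_Galt_le {α : ℝ} (hf : ∀ s, 0 ≤ f θ s) {s : S}
    (hbelow : ∀ t, f θ t < f θ s → Galt f t θ ≤ α) :
    (∑ s', if f θ s' < f θ s then f θ s' else 0) ≤
      ∑ t ∈ univ.filter (fun t => Galt f t θ ≤ α), f θ t := by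
  rw [← sum_filter]
  exact sum_le_sum_of_subset_of_nonneg
    (fun t ht => mem_filter.2 ⟨mem_univ t, hbelow t (mem_filter.1 ht).2⟩)
    (fun t _ _ => hf t)

end

theorem alt_noncoverage_lower_bound_general
    {S Θ : Type*} [Fintype S] [Nonempty S]
    (f : Θ → S → ℝ)
    (hnonneg : ∀ θ s, 0 ≤ f θ s)
    (hsum : ∀ θ, ∑ s, f θ s = 1)
    (θ0 : Θ) (α : ℝ) (hα : α ∈ Set.Ioo (0 : ℝ) 1) :
    α - (Finset.univ.sup' Finset.univ_nonempty
          (fun s : S => ∑ s', if f θ0 s' = f θ0 s then f θ0 s' else 0)) ≤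
      ∑ s ∈ Finset.univ.filter (fun s => Galt f s θ0 ≤ α), f θ0 s := by
  set ε := univ.sup' univ_nonempty
    (fun s : S => ∑ s', if f θ0 s' = f θ0 s then f θ0 s' else 0)
  have level_le_ε (s : S) : (∑ s', if f θ0 s' = f θ0 s then f θ0 s' else 0) ≤ ε :=
    le_sup' (fun s : S => ∑ s', if f θ0 s' = f θ0 s then f θ0 s' else 0) (mem_univ s)
  by_cases hall : ∀ s, Galt f s θ0 ≤ α
  · obtain ⟨s⟩ := ‹Nonempty S›
    have hε : 0 ≤ ε := (sum_nonneg fun s' _ => ite_nonneg (hnonneg θ0 s') le_rfl).trans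
      (level_le_ε s)
    rw [filter_true_of_mem fun s _ => hall s, hsum θ0]
    linarith [hα.2]
  · push Not at hall
    obtain ⟨s, hs, hmin⟩ := exists_min_image (univ.filter fun s => α < Galt f s θ0) (f θ0)
      (by simpa [Finset.Nonempty] using hall)
    have hbelow (t : S) (ht : f θ0 t < f θ0 s) : Galt f t θ0 ≤ α :=
      not_lt.1 fun h => (hmin t (by simpa using h)).not_gt ht
    have hs_out : α < Galt f s θ0 := (mem_filter.1 hs).2
    rw [Galt_eq_sum_lt_add_sum_eq] at hs_out
    linarith [level_le_ε s, sum_lt_le_sum_filter_Galt_le f θ0 (hnonneg θ0) hbelow]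

/-- Near-exactness lower bound (Remark 3): with
ε = max_{s} P(f(S|θ0) = f(s|θ0)), the non-coverage probability of the
alternative construction satisfies
∑_{s : G(s,θ0) ≤ α} f(s|θ0) ≥ α − ε. -/
theorem alt_noncoverage_lower_bound
    {S Θ : Type*} [Fintype S] [Nonempty S] [Fintype Θ]
    (f : Θ → S → ℝ)
    (hnonneg : ∀ θ s, 0 ≤ f θ s)
    (hsum : ∀ θ, ∑ s, f θ s = 1)
    (θ0 : Θ) (α : ℝ) (hα : α ∈ Set.Ioo (0 : ℝ) 1) :
    α - (Finset.univ.sup' Finset.univ_nonempty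
          (fun s : S => ∑ s', if f θ0 s' = f θ0 s then f θ0 s' else 0)) ≤
      ∑ s ∈ Finset.univ.filter (fun s => Galt f s θ0 ≤ α), f θ0 s :=
  alt_noncoverage_lower_bound_general f hnonneg hsum θ0 α hα
end
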